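/- arXiv:2602.20380 — 12 statements merged into one kernel-verified Lean document; each statement's English description precedes it below -/
import Mathlib

section
/- The variety of bounded lattices has the superamalgamation property: for all bounded lattices K, L₁, L₂ and injective bounded lattice homomorphisms h₁ : K → L₁ and h₂ : K → L₂, there exist a bounded lattice M and injective bounded lattice homomorphisms p₁ : L₁ → M and p₂ : L₂ → M such that p₁ ∘ h₁ = p₂ ∘ h₂, and moreover for all a ∈ L₁ and b ∈ L₂, if p₁(a) ≤ p₂(b) then there exists c ∈ K with a ≤ h₁(c) and h₂(c) ≤ b. -/
/-!
Order the disjoint union `L₁ ⊕ L₂` by keeping the orders of `L₁` and `L₂` and declaring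
`a ≤ b` (resp. `b ≤ a`) across the summands iff some `c ∈ K` has `a ≤ h₁ c` and `h₂ c ≤ b`
(resp. `b ≤ h₂ c` and `h₁ c ≤ a`). Since the `hᵢ` are lattice embeddings this is a preorder in
which `h₁ c` and `h₂ c` are equivalent, and in which binary meets, joins and the bounds of each
`Lᵢ` remain greatest lower bounds, least upper bounds, top and bottom: a lower bound `b` of `a`
and `a'` is witnessed by `c` and `c'`, and then `c ⊓ c'` witnesses `b ≤ a ⊓ a'`. Hence the
principal cuts embed both `Lᵢ` into the Dedekind–MacNeille completion of this preorder as bounded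
lattices, and superamalgamation is the definition of the order across the summands.
-/

open Function Set

namespace DedekindCut

variable {α L : Type*} [Preorder α] [Lattice L] [BoundedOrder L]

/-- Meets of cuts intersect their left sets and joins intersect their right sets. -/
def principalBoundedLatticeHom (f : L → α)
    (map_inf : ∀ a b, Iic (f (a ⊓ b)) = Iic (f a) ∩ Iic (f b))
    (map_sup : ∀ a b, Ici (f (a ⊔ b)) = Ici (f a) ∩ Ici (f b))
    (map_top : IsTop (f ⊤)) (map_bot : IsBot (f ⊥)) : BoundedLatticeHom L (DedekindCut α) where
  toFun a := principal (f a)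
  map_sup' a b := ext' (map_sup a b)
  map_inf' a b := ext (map_inf a b)
  map_top' := ext (eq_univ_of_forall map_top)
  map_bot' := ext' (eq_univ_of_forall map_bot)

theorem principalBoundedLatticeHom_injective {f : L → α}
    {map_inf : ∀ a b, Iic (f (a ⊓ b)) = Iic (f a) ∩ Iic (f b)}
    {map_sup : ∀ a b, Ici (f (a ⊔ b)) = Ici (f a) ∩ Ici (f b)} {map_top : IsTop (f ⊤)}
    {map_bot : IsBot (f ⊥)} (hf : ∀ a b, f a ≤ f b → a ≤ b) :
    Injective (principalBoundedLatticeHom f map_inf map_sup map_top map_bot) := fun a b hab => by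
  have hab : principal (f a) = principal (f b) := hab
  exact le_antisymm (hf _ _ (principal_le_principal.1 hab.le))
    (hf _ _ (principal_le_principal.1 hab.ge))

end DedekindCut

section

variable {K A B : Type*}

theorem exists_le_and_le_inf_iff [SemilatticeInf K] [SemilatticeInf A] [SemilatticeInf B]
    {f : K → A} {g : K → B} (hf : ∀ c c', f (c ⊓ c') = f c ⊓ f c') (hg : Monotone g)
    {x : A} {b b' : B} :
    (∃ c, x ≤ f c ∧ g c ≤ b ⊓ b') ↔ (∃ c, x ≤ f c ∧ g c ≤ b) ∧ ∃ c, x ≤ f c ∧ g c ≤ b' :=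
  ⟨fun ⟨c, hxc, hcb⟩ => ⟨⟨c, hxc, hcb.trans inf_le_left⟩, ⟨c, hxc, hcb.trans inf_le_right⟩⟩,
    fun ⟨⟨c, hxc, hcb⟩, ⟨c', hxc', hcb'⟩⟩ =>
      ⟨c ⊓ c', hf c c' ▸ le_inf hxc hxc',
        le_inf ((hg inf_le_left).trans hcb) ((hg inf_le_right).trans hcb')⟩⟩

theorem exists_sup_le_and_le_iff [SemilatticeSup K] [SemilatticeSup A] [SemilatticeSup B]
    {f : K → A} {g : K → B} (hf : Monotone f) (hg : ∀ c c', g (c ⊔ c') = g c ⊔ g c')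
    {a a' : A} {y : B} :
    (∃ c, a ⊔ a' ≤ f c ∧ g c ≤ y) ↔ (∃ c, a ≤ f c ∧ g c ≤ y) ∧ ∃ c, a' ≤ f c ∧ g c ≤ y :=
  ⟨fun ⟨c, hac, hcy⟩ => ⟨⟨c, le_sup_left.trans hac, hcy⟩, ⟨c, le_sup_right.trans hac, hcy⟩⟩,
    fun ⟨⟨c, hac, hcy⟩, ⟨c', hac', hcy'⟩⟩ =>
      ⟨c ⊔ c', sup_le (hac.trans (hf le_sup_left)) (hac'.trans (hf le_sup_right)),
        hg c c' ▸ sup_le hcy hcy'⟩⟩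

end

section

variable {K L₁ L₂ : Type*} [Lattice K] [BoundedOrder K] [Lattice L₁] [BoundedOrder L₁]
  [Lattice L₂] [BoundedOrder L₂]

def Amalgam (_h₁ : BoundedLatticeHom K L₁) (_h₂ : BoundedLatticeHom K L₂) : Type _ := L₁ ⊕ L₂

namespace Amalgam

variable (h₁ : BoundedLatticeHom K L₁) (h₂ : BoundedLatticeHom K L₂)

def inl (a : L₁) : Amalgam h₁ h₂ := Sum.inl a

def inr (b : L₂) : Amalgam h₁ h₂ := Sum.inr b

protected def Le : Amalgam h₁ h₂ → Amalgam h₁ h₂ → Prop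
  | Sum.inl a, Sum.inl a' => a ≤ a'
  | Sum.inl a, Sum.inr b => ∃ c, a ≤ h₁ c ∧ h₂ c ≤ b
  | Sum.inr b, Sum.inl a => ∃ c, b ≤ h₂ c ∧ h₁ c ≤ a
  | Sum.inr b, Sum.inr b' => b ≤ b'

-- Transitivity through the other summand needs the `hᵢ` to reflect the order.
variable [Fact (Injective h₁)] [Fact (Injective h₂)]

instance : Preorder (Amalgam h₁ h₂) where
  le := Amalgam.Le h₁ h₂
  le_refl
    | Sum.inl a => le_refl a
    | Sum.inr b => le_refl b
  le_trans
    | Sum.inl _, Sum.inl _, Sum.inl _, hxy, hyz => hxy.trans hyz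
    | Sum.inl _, Sum.inl _, Sum.inr _, hxy, ⟨c, hxc, hcz⟩ => ⟨c, hxy.trans hxc, hcz⟩
    | Sum.inl _, Sum.inr _, Sum.inl _, ⟨c, hxc, hcy⟩, ⟨c', hyc', hc'z⟩ =>
        hxc.trans <| (OrderHomClass.mono h₁ <|
          (orderEmbeddingOfInjective h₂ Fact.out).le_iff_le.1 (hcy.trans hyc')).trans hc'z
    | Sum.inl _, Sum.inr _, Sum.inr _, ⟨c, hxc, hcy⟩, hyz => ⟨c, hxc, hcy.trans hyz⟩
    | Sum.inr _, Sum.inl _, Sum.inl _, ⟨c, hxc, hcy⟩, hyz => ⟨c, hxc, hcy.trans hyz⟩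
    | Sum.inr _, Sum.inl _, Sum.inr _, ⟨c, hxc, hcy⟩, ⟨c', hyc', hc'z⟩ =>
        hxc.trans <| (OrderHomClass.mono h₂ <|
          (orderEmbeddingOfInjective h₁ Fact.out).le_iff_le.1 (hcy.trans hyc')).trans hc'z
    | Sum.inr _, Sum.inr _, Sum.inl _, hxy, ⟨c, hxc, hcz⟩ => ⟨c, hxy.trans hxc, hcz⟩
    | Sum.inr _, Sum.inr _, Sum.inr _, hxy, hyz => hxy.trans hyz

variable {h₁ h₂}

theorem inl_le_inl {a a' : L₁} : inl h₁ h₂ a ≤ inl h₁ h₂ a' ↔ a ≤ a' := .rfl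

theorem inr_le_inr {b b' : L₂} : inr h₁ h₂ b ≤ inr h₁ h₂ b' ↔ b ≤ b' := .rfl

theorem inl_le_inr {a : L₁} {b : L₂} :
    inl h₁ h₂ a ≤ inr h₁ h₂ b ↔ ∃ c, a ≤ h₁ c ∧ h₂ c ≤ b := .rfl

theorem inr_le_inl {a : L₁} {b : L₂} :
    inr h₁ h₂ b ≤ inl h₁ h₂ a ↔ ∃ c, b ≤ h₂ c ∧ h₁ c ≤ a := .rfl

theorem Iic_inl_inf (a a' : L₁) :
    Iic (inl h₁ h₂ (a ⊓ a')) = Iic (inl h₁ h₂ a) ∩ Iic (inl h₁ h₂ a') := by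
  ext (x | y)
  · exact le_inf_iff (α := L₁)
  · exact exists_le_and_le_inf_iff (map_inf h₂) (OrderHomClass.mono h₁)

theorem Iic_inr_inf (b b' : L₂) :
    Iic (inr h₁ h₂ (b ⊓ b')) = Iic (inr h₁ h₂ b) ∩ Iic (inr h₁ h₂ b') := by
  ext (x | y)
  · exact exists_le_and_le_inf_iff (map_inf h₁) (OrderHomClass.mono h₂)
  · exact le_inf_iff (α := L₂)

theorem Ici_inl_sup (a a' : L₁) :
    Ici (inl h₁ h₂ (a ⊔ a')) = Ici (inl h₁ h₂ a) ∩ Ici (inl h₁ h₂ a') := by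
  ext (x | y)
  · exact sup_le_iff (α := L₁)
  · exact exists_sup_le_and_le_iff (OrderHomClass.mono h₁) (map_sup h₂)

theorem Ici_inr_sup (b b' : L₂) :
    Ici (inr h₁ h₂ (b ⊔ b')) = Ici (inr h₁ h₂ b) ∩ Ici (inr h₁ h₂ b') := by
  ext (x | y)
  · exact exists_sup_le_and_le_iff (OrderHomClass.mono h₂) (map_sup h₁)
  · exact sup_le_iff (α := L₂)

theorem isTop_inl_top : IsTop (inl h₁ h₂ ⊤) := by
  rintro (x | y)
  · exact le_top
  · exact ⟨⊤, le_top.trans (map_top h₂).ge, le_top⟩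

theorem isTop_inr_top : IsTop (inr h₁ h₂ ⊤) := by
  rintro (x | y)
  · exact ⟨⊤, le_top.trans (map_top h₁).ge, le_top⟩
  · exact le_top

theorem isBot_inl_bot : IsBot (inl h₁ h₂ ⊥) := by
  rintro (x | y)
  · exact bot_le
  · exact ⟨⊥, bot_le, (map_bot h₂).le.trans bot_le⟩

theorem isBot_inr_bot : IsBot (inr h₁ h₂ ⊥) := by
  rintro (x | y)
  · exact ⟨⊥, bot_le, (map_bot h₁).le.trans bot_le⟩
  · exact bot_le

variable (h₁ h₂)

def completionInl : BoundedLatticeHom L₁ (DedekindCut (Amalgam h₁ h₂)) :=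
  DedekindCut.principalBoundedLatticeHom (inl h₁ h₂) Iic_inl_inf Ici_inl_sup isTop_inl_top
    isBot_inl_bot

def completionInr : BoundedLatticeHom L₂ (DedekindCut (Amalgam h₁ h₂)) :=
  DedekindCut.principalBoundedLatticeHom (inr h₁ h₂) Iic_inr_inf Ici_inr_sup isTop_inr_top
    isBot_inr_bot

theorem completionInl_injective : Injective (completionInl h₁ h₂) :=
  DedekindCut.principalBoundedLatticeHom_injective fun _ _ => inl_le_inl.1

theorem completionInr_injective : Injective (completionInr h₁ h₂) :=
  DedekindCut.principalBoundedLatticeHom_injective fun _ _ => inr_le_inr.1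

theorem completionInl_map_eq_completionInr_map (c : K) :
    completionInl h₁ h₂ (h₁ c) = completionInr h₁ h₂ (h₂ c) :=
  le_antisymm (DedekindCut.principal_le_principal.2 (inl_le_inr.2 ⟨c, le_rfl, le_rfl⟩))
    (DedekindCut.principal_le_principal.2 (inr_le_inl.2 ⟨c, le_rfl, le_rfl⟩))

variable {h₁ h₂}

theorem completionInl_le_completionInr_iff {a : L₁} {b : L₂} :
    completionInl h₁ h₂ a ≤ completionInr h₁ h₂ b ↔ ∃ c, a ≤ h₁ c ∧ h₂ c ≤ b :=
  DedekindCut.principal_le_principal.trans inl_le_inr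

end Amalgam

end

open Amalgam in
/-- Superamalgamation property for the variety of bounded lattices. -/
theorem bounded_lattices_superamalgamation
    (K L₁ L₂ : Type) [Lattice K] [BoundedOrder K] [Lattice L₁] [BoundedOrder L₁]
    [Lattice L₂] [BoundedOrder L₂]
    (h₁ : BoundedLatticeHom K L₁) (h₂ : BoundedLatticeHom K L₂)
    (hinj₁ : Function.Injective h₁) (hinj₂ : Function.Injective h₂) :
    ∃ (M : BddLat) (p₁ : BoundedLatticeHom L₁ M) (p₂ : BoundedLatticeHom L₂ M),
      Function.Injective p₁ ∧ Function.Injective p₂ ∧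
      (∀ c : K, p₁ (h₁ c) = p₂ (h₂ c)) ∧
      (∀ (a : L₁) (b : L₂), p₁ a ≤ p₂ b → ∃ c : K, a ≤ h₁ c ∧ h₂ c ≤ b) := by
  have : Fact (Injective h₁) := ⟨hinj₁⟩
  have : Fact (Injective h₂) := ⟨hinj₂⟩
  -- `M` lives in an arbitrary universe, so the completion is lifted into it.
  have up := (ULift.orderIso (α := DedekindCut (Amalgam h₁ h₂))).symm
  refine ⟨.of (ULift (DedekindCut (Amalgam h₁ h₂))),
    (up : BoundedLatticeHom _ _).comp (completionInl h₁ h₂),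
    (up : BoundedLatticeHom _ _).comp (completionInr h₁ h₂), ?_, ?_, ?_, ?_⟩
  · exact up.injective.comp (completionInl_injective h₁ h₂)
  · exact up.injective.comp (completionInr_injective h₁ h₂)
  · exact fun c => congrArg up (completionInl_map_eq_completionInr_map h₁ h₂ c)
  · exact fun a b hab => completionInl_le_completionInr_iff.1 (up.le_iff_le.1 hab)
end

section
/- Separation lemma for L-spaces: let X be a meet-semilattice with a greatest element ⊤, equipped with a compact topology such that (a) whenever ¬(x ≤ y) there is a clopen filter W with x ∈ W and y ∉ W, and (b) for all clopen filters W₁, W₂ the set {x ∈ X | ∃ y ∈ W₁, ∃ z ∈ W₂, y ⊓ z ≤ x} is clopen. Then for any closed subsets U, V ⊆ X such that U is a filter, the complement X \ V is a filter, and U ∩ V = ∅, there exists a clopen filter W with U ⊆ W and V ∩ W = ∅. -/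
/-!
For a single `u ∈ U`, the clopen filters containing `u` are closed under intersection, so their
complements form a directed open cover of the compact set `V`; one of them already misses `V`.
Dually, the clopen filters contained in the filter `Vᶜ` are closed under the join `filterJoin`
(clopen by hypothesis (b)), so they form a directed open cover of the compact set `U`, and one of
them contains all of `U`.
-/

/-- A filter of a meet-semilattice with top: contains ⊤, upward closed,
closed under binary infima. -/
def IsFilterT {X : Type} [SemilatticeInf X] [OrderTop X] (S : Set X) : Prop :=
  (⊤ : X) ∈ S ∧ (∀ x ∈ S, ∀ y, x ≤ y → y ∈ S) ∧ (∀ x ∈ S, ∀ y ∈ S, x ⊓ y ∈ S)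

section Order

variable {X : Type} [SemilatticeInf X] [OrderTop X]

def filterJoin (W₁ W₂ : Set X) : Set X :=
  {x : X | ∃ y ∈ W₁, ∃ z ∈ W₂, y ⊓ z ≤ x}

theorem isFilterT_univ : IsFilterT (Set.univ : Set X) :=
  ⟨trivial, fun _ _ _ _ => trivial, fun _ _ _ _ => trivial⟩

theorem IsFilterT.inter {W₁ W₂ : Set X} (h₁ : IsFilterT W₁) (h₂ : IsFilterT W₂) :
    IsFilterT (W₁ ∩ W₂) :=
  ⟨⟨h₁.1, h₂.1⟩, fun x hx y hxy => ⟨h₁.2.1 x hx.1 y hxy, h₂.2.1 x hx.2 y hxy⟩,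
    fun x hx y hy => ⟨h₁.2.2 x hx.1 y hy.1, h₂.2.2 x hx.2 y hy.2⟩⟩

theorem IsFilterT.filterJoin {W₁ W₂ : Set X} (h₁ : IsFilterT W₁) (h₂ : IsFilterT W₂) :
    IsFilterT (filterJoin W₁ W₂) := by
  refine ⟨⟨⊤, h₁.1, ⊤, h₂.1, le_top⟩, ?_, ?_⟩
  · rintro x ⟨y, hy, z, hz, hyz⟩ w hxw
    exact ⟨y, hy, z, hz, hyz.trans hxw⟩
  · rintro x ⟨y₁, hy₁, z₁, hz₁, hx⟩ w ⟨y₂, hy₂, z₂, hz₂, hw⟩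
    refine ⟨y₁ ⊓ y₂, h₁.2.2 _ hy₁ _ hy₂, z₁ ⊓ z₂, h₂.2.2 _ hz₁ _ hz₂, ?_⟩
    calc y₁ ⊓ y₂ ⊓ (z₁ ⊓ z₂) = y₁ ⊓ z₁ ⊓ (y₂ ⊓ z₂) := inf_inf_inf_comm _ _ _ _
      _ ≤ x ⊓ w := inf_le_inf hx hw

theorem left_subset_filterJoin {W₁ W₂ : Set X} (h₂ : (⊤ : X) ∈ W₂) :
    W₁ ⊆ filterJoin W₁ W₂ :=
  fun x hx => ⟨x, hx, ⊤, h₂, inf_le_left⟩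

theorem right_subset_filterJoin {W₁ W₂ : Set X} (h₁ : (⊤ : X) ∈ W₁) :
    W₂ ⊆ filterJoin W₁ W₂ :=
  fun x hx => ⟨⊤, h₁, x, hx, inf_le_right⟩

theorem filterJoin_subset {W₁ W₂ F : Set X} (hF : IsFilterT F) (h₁ : W₁ ⊆ F) (h₂ : W₂ ⊆ F) :
    filterJoin W₁ W₂ ⊆ F := by
  rintro x ⟨y, hy, z, hz, hyz⟩
  exact hF.2.1 _ (hF.2.2 y (h₁ hy) z (h₂ hz)) x hyz

end Order

section Topology

variable {X : Type} [SemilatticeInf X] [OrderTop X] [TopologicalSpace X]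

theorem exists_isClopen_isFilterT_mem_subset_compl {K : Set X} (hK : IsCompact K) {u : X}
    (hsep : ∀ v ∈ K, ∃ W : Set X, IsClopen W ∧ IsFilterT W ∧ u ∈ W ∧ v ∉ W) :
    ∃ W : Set X, IsClopen W ∧ IsFilterT W ∧ u ∈ W ∧ W ⊆ Kᶜ := by
  let ι := {W : Set X // IsClopen W ∧ IsFilterT W ∧ u ∈ W}
  have : Nonempty ι := ⟨⟨Set.univ, isClopen_univ, isFilterT_univ, trivial⟩⟩
  have hcover : K ⊆ ⋃ W : ι, (W : Set X)ᶜ := fun v hv => by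
    obtain ⟨W, hWc, hWf, huW, hvW⟩ := hsep v hv
    exact Set.mem_iUnion.2 ⟨⟨W, hWc, hWf, huW⟩, hvW⟩
  have hdir : Directed (· ⊆ ·) fun W : ι => (W : Set X)ᶜ := fun W₁ W₂ =>
    ⟨⟨W₁ ∩ W₂, W₁.2.1.inter W₂.2.1, W₁.2.2.1.inter W₂.2.2.1, W₁.2.2.2, W₂.2.2.2⟩,
      Set.compl_subset_compl.2 Set.inter_subset_left,
      Set.compl_subset_compl.2 Set.inter_subset_right⟩
  obtain ⟨⟨W, hWc, hWf, huW⟩, hKW⟩ :=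
    hK.elim_directed_cover _ (fun W => W.2.1.compl.isOpen) hcover hdir
  exact ⟨W, hWc, hWf, huW, Set.subset_compl_comm.1 hKW⟩

theorem exists_isClopen_isFilterT_superset_subset
    (hjoin : ∀ W₁ W₂ : Set X, IsClopen W₁ → IsFilterT W₁ → IsClopen W₂ → IsFilterT W₂ →
      IsClopen (filterJoin W₁ W₂))
    {K F : Set X} (hK : IsCompact K) (hKne : K.Nonempty) (hF : IsFilterT F)
    (hsep : ∀ u ∈ K, ∃ W : Set X, IsClopen W ∧ IsFilterT W ∧ u ∈ W ∧ W ⊆ F) :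
    ∃ W : Set X, IsClopen W ∧ IsFilterT W ∧ K ⊆ W ∧ W ⊆ F := by
  let ι := {W : Set X // IsClopen W ∧ IsFilterT W ∧ W ⊆ F}
  have : Nonempty ι := by
    obtain ⟨W, hWc, hWf, -, hWF⟩ := hsep _ hKne.some_mem
    exact ⟨⟨W, hWc, hWf, hWF⟩⟩
  have hcover : K ⊆ ⋃ W : ι, (W : Set X) := fun u hu => by
    obtain ⟨W, hWc, hWf, huW, hWF⟩ := hsep u hu
    exact Set.mem_iUnion.2 ⟨⟨W, hWc, hWf, hWF⟩, huW⟩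
  have hdir : Directed (· ⊆ ·) fun W : ι => (W : Set X) := fun W₁ W₂ =>
    ⟨⟨filterJoin W₁ W₂, hjoin _ _ W₁.2.1 W₁.2.2.1 W₂.2.1 W₂.2.2.1,
        W₁.2.2.1.filterJoin W₂.2.2.1, filterJoin_subset hF W₁.2.2.2 W₂.2.2.2⟩,
      left_subset_filterJoin W₂.2.2.1.1, right_subset_filterJoin W₁.2.2.1.1⟩
  obtain ⟨⟨W, hWc, hWf, hWF⟩, hKW⟩ :=
    hK.elim_directed_cover _ (fun W => W.2.1.isOpen) hcover hdir
  exact ⟨W, hWc, hWf, hKW, hWF⟩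

end Topology

/-- Separation lemma for L-spaces. -/
theorem lspace_separation (X : Type) [SemilatticeInf X] [OrderTop X]
    [TopologicalSpace X] [CompactSpace X]
    (hsep : ∀ x y : X, ¬ x ≤ y → ∃ W : Set X, IsClopen W ∧ IsFilterT W ∧ x ∈ W ∧ y ∉ W)
    (hjoin : ∀ W₁ W₂ : Set X, IsClopen W₁ → IsFilterT W₁ → IsClopen W₂ → IsFilterT W₂ →
      IsClopen {x : X | ∃ y ∈ W₁, ∃ z ∈ W₂, y ⊓ z ≤ x})
    (U V : Set X) (hU : IsClosed U) (hV : IsClosed V)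
    (hUf : IsFilterT U) (hVf : IsFilterT Vᶜ) (hdisj : U ∩ V = ∅) :
    ∃ W : Set X, IsClopen W ∧ IsFilterT W ∧ U ⊆ W ∧ V ∩ W = ∅ := by
  have hUV : ∀ u ∈ U, ∀ v ∈ V, ¬ u ≤ v := fun u hu v hv huv =>
    Set.eq_empty_iff_forall_notMem.1 hdisj v ⟨hUf.2.1 u hu v huv, hv⟩
  obtain ⟨W, hWc, hWf, hUW, hWV⟩ :=
    exists_isClopen_isFilterT_superset_subset hjoin hU.isCompact ⟨⊤, hUf.1⟩ hVf
      fun u hu => exists_isClopen_isFilterT_mem_subset_compl hV.isCompact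
        fun v hv => hsep u v (hUV u hu v hv)
  exact ⟨W, hWc, hWf, hUW,
    Set.disjoint_iff_inter_eq_empty.1 (Set.subset_compl_iff_disjoint_left.1 hWV)⟩
end

section
/- Let X and Y be meet-semilattices with greatest element ⊤ and let f : Y → X be an L-morphism. Then: (1) for every filter U ⊆ Y, the upward closure {x ∈ X | ∃ u ∈ U, f(u) ≤ x} of f[U] is a filter of X; and (2) for every filter V ⊆ Y, the complement of the downward closure of f[Y \ V], i.e. the set {x ∈ X | ∀ z ∈ Y, z ∉ V → ¬(x ≤ f(z))}, is a filter of X. -/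
section

variable {X Y : Type} [SemilatticeInf X] [OrderTop X] [SemilatticeInf Y] [OrderTop Y]

theorem IsFilterT.upperClosure_image {f : Y → X} (hf : Monotone f) {U : Set Y}
    (hU : IsFilterT U) : IsFilterT {x : X | ∃ u ∈ U, f u ≤ x} := by
  obtain ⟨hU_top, -, hU_inf⟩ := hU
  refine ⟨⟨⊤, hU_top, le_top⟩, ?_, ?_⟩
  · rintro x ⟨u, hu, hux⟩ y hxy
    exact ⟨u, hu, hux.trans hxy⟩
  · rintro x ⟨u, hu, hux⟩ y ⟨v, hv, hvy⟩
    exact ⟨u ⊓ v, hU_inf u hu v hv, (hf.map_inf_le u v).trans (inf_le_inf hux hvy)⟩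

theorem IsFilterT.compl_lowerClosure_image_compl {f : Y → X}
    (hf_top : ∀ y : Y, f y = ⊤ → y = ⊤)
    (hf_inf : ∀ (x : Y) (y' z' : X), y' ⊓ z' ≤ f x →
      ∃ y z : Y, y' ≤ f y ∧ z' ≤ f z ∧ y ⊓ z ≤ x)
    {V : Set Y} (hV : IsFilterT V) :
    IsFilterT {x : X | ∀ z : Y, z ∉ V → ¬ x ≤ f z} := by
  obtain ⟨hV_top, hV_up, hV_inf⟩ := hV
  refine ⟨?_, ?_, ?_⟩
  · intro z hz htop_le
    exact hz (hf_top z (top_le_iff.mp htop_le) ▸ hV_top)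
  · intro x hx y hxy z hz hyz
    exact hx z hz (hxy.trans hyz)
  · intro x hx y hy z hz hxyz
    obtain ⟨a, b, hxa, hyb, hab⟩ := hf_inf z x y hxyz
    have ha : a ∈ V := by_contra fun ha => hx a ha hxa
    have hb : b ∈ V := by_contra fun hb => hy b hb hyb
    exact hz (hV_up _ (hV_inf a ha b hb) z hab)

end

theorem lmorphism_image_filters_general (X Y : Type) [SemilatticeInf X] [OrderTop X]
    [SemilatticeInf Y] [OrderTop Y]
    (f : Y → X)
    (hinf : ∀ a b : Y, f (a ⊓ b) = f a ⊓ f b)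
    (hcond1 : ∀ y : Y, f y = ⊤ → y = ⊤)
    (hcond2 : ∀ (x : Y) (y' z' : X), y' ⊓ z' ≤ f x →
      ∃ y z : Y, y' ≤ f y ∧ z' ≤ f z ∧ y ⊓ z ≤ x) :
    (∀ U : Set Y, IsFilterT U → IsFilterT {x : X | ∃ u ∈ U, f u ≤ x}) ∧
    (∀ V : Set Y, IsFilterT V → IsFilterT {x : X | ∀ z : Y, z ∉ V → ¬ x ≤ f z}) :=
  have hmono : Monotone f := OrderHomClass.mono (InfHom.mk f hinf)
  ⟨fun _ hU => hU.upperClosure_image hmono,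
    fun _ hV => hV.compl_lowerClosure_image_compl hcond1 hcond2⟩

/-- The upward closure of the image of a filter under an L-morphism is a filter,
and the complement of the downward closure of the image of the complement of a
filter is a filter. -/
theorem lmorphism_image_filters (X Y : Type) [SemilatticeInf X] [OrderTop X]
    [SemilatticeInf Y] [OrderTop Y]
    (f : Y → X)
    (hinf : ∀ a b : Y, f (a ⊓ b) = f a ⊓ f b) (htop : f ⊤ = ⊤)
    (hcond1 : ∀ y : Y, f y = ⊤ → y = ⊤)
    (hcond2 : ∀ (x : Y) (y' z' : X), y' ⊓ z' ≤ f x →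
      ∃ y z : Y, y' ≤ f y ∧ z' ≤ f z ∧ y ⊓ z ≤ x) :
    (∀ U : Set Y, IsFilterT U → IsFilterT {x : X | ∃ u ∈ U, f u ≤ x}) ∧
    (∀ V : Set Y, IsFilterT V → IsFilterT {x : X | ∀ z : Y, z ∉ V → ¬ x ≤ f z}) :=
  lmorphism_image_filters_general X Y f hinf hcond1 hcond2
end

section
/- Let X, Y₁, Y₂ be meet-semilattices with greatest element ⊤, and let f₁ : Y₁ → X and f₂ : Y₂ → X be surjective L-morphisms. Let P = {(x₁, x₂) ∈ Y₁ × Y₂ | f₁(x₁) = f₂(x₂)}, a sub-meet-semilattice of the product with componentwise order, infimum, and top (⊤, ⊤). Then the first projection π₁ : P → Y₁, π₁(x₁, x₂) = x₁, is surjective and is an L-morphism; that is: π₁ preserves binary infima and ⊤; if π₁(x₁, x₂) = ⊤ then (x₁, x₂) = (⊤, ⊤); and whenever y₁ ⊓ z₁ ≤ π₁(x₁, x₂) there exist (y₁', y₂'), (z₁', z₂') ∈ P with y₁ ≤ π₁(y₁', y₂'), z₁ ≤ π₁(z₁', z₂'), and (y₁', y₂') ⊓ (z₁', z₂') ≤ (x₁,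 x₂). -/
/-!
Over a point `p` of the pullback, a splitting `y₁ ⊓ z₁ ≤ p.1` maps under `f₁` to a splitting of
`f₁ p.1 = f₂ p.2`, which the L-morphism `f₂` lifts to `y₂ ⊓ z₂ ≤ p.2` with `f₁ y₁ ≤ f₂ y₂` and
`f₁ z₁ ≤ f₂ z₂`. Since `f₂` is surjective and preserves meets, `y₂` and `z₂` can be shrunk to
elements lying exactly over `f₁ y₁` and `f₁ z₁`; this makes `(y₁, y₂)` and `(z₁, z₂)` points of
the pullback.
-/

/-- An L-morphism between meet-semilattices with top. -/
def IsLMorphism {A B : Type} [SemilatticeInf A] [OrderTop A]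
    [SemilatticeInf B] [OrderTop B] (f : A → B) : Prop :=
  (∀ a b : A, f (a ⊓ b) = f a ⊓ f b) ∧ f ⊤ = ⊤ ∧ (∀ a : A, f a = ⊤ → a = ⊤) ∧
  (∀ (x : A) (y' z' : B), y' ⊓ z' ≤ f x →
    ∃ y z : A, y' ≤ f y ∧ z' ≤ f z ∧ y ⊓ z ≤ x)

theorem exists_le_map_eq_of_le_map {A B : Type*} [SemilatticeInf A] [SemilatticeInf B]
    {f : A → B} (hinf : ∀ a b : A, f (a ⊓ b) = f a ⊓ f b) (hsurj : Function.Surjective f)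
    {b : B} {a : A} (hba : b ≤ f a) : ∃ a' ≤ a, f a' = b := by
  obtain ⟨c, rfl⟩ := hsurj b
  exact ⟨c ⊓ a, inf_le_right, by rw [hinf, inf_eq_left.2 hba]⟩

section Pullback

variable {X Y₁ Y₂ : Type} {f₁ : Y₁ → X} {f₂ : Y₂ → X}

theorem exists_fst_eq_of_surjective (hsurj₂ : Function.Surjective f₂) (y₁ : Y₁) :
    ∃ p : Y₁ × Y₂, f₁ p.1 = f₂ p.2 ∧ p.1 = y₁ := by
  obtain ⟨y₂, hy₂⟩ := hsurj₂ (f₁ y₁)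
  exact ⟨(y₁, y₂), hy₂.symm, rfl⟩

theorem eq_top_of_fst_eq_top [Top X] [Top Y₁] [Top Y₂]
    (htop₁ : f₁ ⊤ = ⊤) (hrefl₂ : ∀ y : Y₂, f₂ y = ⊤ → y = ⊤)
    {p : Y₁ × Y₂} (hp : f₁ p.1 = f₂ p.2) (h₁ : p.1 = ⊤) : p = ⊤ :=
  Prod.ext h₁ (hrefl₂ p.2 (by rw [← hp, h₁, htop₁]))

theorem exists_pullback_lift_of_inf_le_fst [SemilatticeInf X] [SemilatticeInf Y₁]
    [SemilatticeInf Y₂] [OrderTop X] [OrderTop Y₂]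
    (hinf₁ : ∀ a b : Y₁, f₁ (a ⊓ b) = f₁ a ⊓ f₁ b) (hL₂ : IsLMorphism f₂)
    (hsurj₂ : Function.Surjective f₂) {p : Y₁ × Y₂} (hp : f₁ p.1 = f₂ p.2) {y₁ z₁ : Y₁}
    (hle : y₁ ⊓ z₁ ≤ p.1) :
    ∃ q r : Y₁ × Y₂, f₁ q.1 = f₂ q.2 ∧ f₁ r.1 = f₂ r.2 ∧ q.1 = y₁ ∧ r.1 = z₁ ∧ q ⊓ r ≤ p := by
  obtain ⟨hinf₂, -, -, hlift₂⟩ := hL₂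
  have hsplit : f₁ y₁ ⊓ f₁ z₁ ≤ f₂ p.2 := by
    rw [← hinf₁, ← hp]
    exact Monotone.of_map_inf hinf₁ hle
  obtain ⟨y₂, z₂, hy₂, hz₂, hyz₂⟩ := hlift₂ p.2 _ _ hsplit
  obtain ⟨y₂', hy₂'y₂, hy₂'⟩ := exists_le_map_eq_of_le_map hinf₂ hsurj₂ hy₂
  obtain ⟨z₂', hz₂'z₂, hz₂'⟩ := exists_le_map_eq_of_le_map hinf₂ hsurj₂ hz₂
  exact ⟨(y₁, y₂'), (z₁, z₂'), hy₂'.symm, hz₂'.symm, rfl, rfl,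
    hle, (inf_le_inf hy₂'y₂ hz₂'z₂).trans hyz₂⟩

end Pullback

theorem pullback_projection_lmorphism_general (X Y₁ Y₂ : Type) [SemilatticeInf X] [OrderTop X]
    [SemilatticeInf Y₁] [OrderTop Y₁] [SemilatticeInf Y₂] [OrderTop Y₂]
    (f₁ : Y₁ → X) (f₂ : Y₂ → X)
    (hL₁ : IsLMorphism f₁) (hL₂ : IsLMorphism f₂)
    (hsurj₂ : Function.Surjective f₂)
    (Pb : Set (Y₁ × Y₂)) (hPb : Pb = {p : Y₁ × Y₂ | f₁ p.1 = f₂ p.2}) :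
    (∀ x₁ : Y₁, ∃ p ∈ Pb, p.1 = x₁) ∧
    (∀ p q : Y₁ × Y₂, (p ⊓ q).1 = p.1 ⊓ q.1) ∧
    ((⊤ : Y₁ × Y₂).1 = ⊤ ∧ (⊤ : Y₁ × Y₂) = (⊤, ⊤)) ∧
    (∀ p ∈ Pb, p.1 = ⊤ → p = (⊤ : Y₁ × Y₂)) ∧
    (∀ p ∈ Pb, ∀ y₁ z₁ : Y₁, y₁ ⊓ z₁ ≤ p.1 →
      ∃ q ∈ Pb, ∃ r ∈ Pb, y₁ ≤ q.1 ∧ z₁ ≤ r.1 ∧ q ⊓ r ≤ p) := by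
  subst hPb
  refine ⟨exists_fst_eq_of_surjective hsurj₂, fun _ _ ↦ rfl, ⟨rfl, rfl⟩,
    fun _ hp ↦ eq_top_of_fst_eq_top hL₁.2.1 hL₂.2.2.1 hp, fun p hp y₁ z₁ hle ↦ ?_⟩
  obtain ⟨q, r, hq, hr, rfl, rfl, hqr⟩ :=
    exists_pullback_lift_of_inf_le_fst hL₁.1 hL₂ hsurj₂ hp hle
  exact ⟨q, hq, r, hr, le_rfl, le_rfl, hqr⟩

/-- The first projection from the pullback of two surjective L-morphisms is a
surjective L-morphism. -/
theorem pullback_projection_lmorphism (X Y₁ Y₂ : Type) [SemilatticeInf X] [OrderTop X]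
    [SemilatticeInf Y₁] [OrderTop Y₁] [SemilatticeInf Y₂] [OrderTop Y₂]
    (f₁ : Y₁ → X) (f₂ : Y₂ → X)
    (hL₁ : IsLMorphism f₁) (hL₂ : IsLMorphism f₂)
    (hsurj₁ : Function.Surjective f₁) (hsurj₂ : Function.Surjective f₂)
    (Pb : Set (Y₁ × Y₂)) (hPb : Pb = {p : Y₁ × Y₂ | f₁ p.1 = f₂ p.2}) :
    (∀ x₁ : Y₁, ∃ p ∈ Pb, p.1 = x₁) ∧
    (∀ p q : Y₁ × Y₂, (p ⊓ q).1 = p.1 ⊓ q.1) ∧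
    ((⊤ : Y₁ × Y₂).1 = ⊤ ∧ (⊤ : Y₁ × Y₂) = (⊤, ⊤)) ∧
    (∀ p ∈ Pb, p.1 = ⊤ → p = (⊤ : Y₁ × Y₂)) ∧
    (∀ p ∈ Pb, ∀ y₁ z₁ : Y₁, y₁ ⊓ z₁ ≤ p.1 →
      ∃ q ∈ Pb, ∃ r ∈ Pb, y₁ ≤ q.1 ∧ z₁ ≤ r.1 ∧ q ⊓ r ≤ p) :=
  pullback_projection_lmorphism_general X Y₁ Y₂ f₁ f₂ hL₁ hL₂ hsurj₂ Pb hPb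
end

section
/- Let X and Y be meet-semilattices with greatest element ⊤ and let f : X → Y be an L-morphism. Then the preimage map f⁻¹ acts as a lattice homomorphism on filters: (1) for every filter F of Y, f⁻¹[F] is a filter of X; (2) f⁻¹[{⊤}] = {⊤}; (3) for all filters F, G of Y, f⁻¹[F ∩ G] = f⁻¹[F] ∩ f⁻¹[G]; and (4) for all filters F, G of Y, f⁻¹[{y | ∃ a ∈ F, ∃ b ∈ G, a ⊓ b ≤ y}] = {x | ∃ a ∈ f⁻¹[F], ∃ b ∈ f⁻¹[G], a ⊓ b ≤ x}. -/
section

variable {X Y : Type} [SemilatticeInf X] [OrderTop X] [SemilatticeInf Y] [OrderTop Y]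

namespace IsFilterT

theorem isUpperSet {S : Set X} (hS : IsFilterT S) : IsUpperSet S :=
  fun _ _ hxy hx => hS.2.1 _ hx _ hxy

theorem preimage {F : Set Y} (hF : IsFilterT F) (f : InfTopHom X Y) : IsFilterT (f ⁻¹' F) :=
  ⟨by simpa using hF.1,
    fun _ hx _ hxy => hF.isUpperSet (OrderHomClass.mono f hxy) hx,
    fun x hx y hy => by simpa only [Set.mem_preimage, map_inf] using hF.2.2 _ hx _ hy⟩

end IsFilterT

namespace IsLMorphism

variable {f : X → Y}

def toInfTopHom (hf : IsLMorphism f) : InfTopHom X Y where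
  toFun := f
  map_inf' := hf.1
  map_top' := hf.2.1

theorem monotone (hf : IsLMorphism f) : Monotone f :=
  OrderHomClass.mono hf.toInfTopHom

theorem preimage_top (hf : IsLMorphism f) : f ⁻¹' {⊤} = {⊤} :=
  Set.ext fun x => ⟨hf.2.2.1 x, fun hx => hx ▸ hf.2.1⟩

theorem preimage_setOf_inf_le (hf : IsLMorphism f) {F G : Set Y} (hF : IsUpperSet F)
    (hG : IsUpperSet G) :
    f ⁻¹' {y | ∃ a ∈ F, ∃ b ∈ G, a ⊓ b ≤ y} =
      {x | ∃ a ∈ f ⁻¹' F, ∃ b ∈ f ⁻¹' G, a ⊓ b ≤ x} := by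
  ext x
  constructor
  · rintro ⟨a, ha, b, hb, hab⟩
    -- condition (2) of an L-morphism pulls the bound `a ⊓ b ≤ f x` back to `X`
    obtain ⟨y, z, hay, hbz, hyz⟩ := hf.2.2.2 x a b hab
    exact ⟨y, hF hay ha, z, hG hbz hb, hyz⟩
  · rintro ⟨a, ha, b, hb, hab⟩
    exact ⟨f a, ha, f b, hb, hf.1 a b ▸ hf.monotone hab⟩

end IsLMorphism

end

/-- Preimage under an L-morphism acts as a lattice homomorphism on filters. -/
theorem lmorphism_preimage_lattice_hom (X Y : Type) [SemilatticeInf X] [OrderTop X]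
    [SemilatticeInf Y] [OrderTop Y]
    (f : X → Y) (hf : IsLMorphism f) :
    (∀ F : Set Y, IsFilterT F → IsFilterT (f ⁻¹' F)) ∧
    (f ⁻¹' ({⊤} : Set Y) = ({⊤} : Set X)) ∧
    (∀ F G : Set Y, IsFilterT F → IsFilterT G →
      f ⁻¹' (F ∩ G) = f ⁻¹' F ∩ f ⁻¹' G) ∧
    (∀ F G : Set Y, IsFilterT F → IsFilterT G →
      f ⁻¹' {y : Y | ∃ a ∈ F, ∃ b ∈ G, a ⊓ b ≤ y} =
        {x : X | ∃ a ∈ f ⁻¹' F, ∃ b ∈ f ⁻¹' G, a ⊓ b ≤ x}) :=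
  ⟨fun _ hF => hF.preimage hf.toInfTopHom,
    hf.preimage_top,
    fun _ _ _ _ => Set.preimage_inter,
    fun _ _ hF hG => hf.preimage_setOf_inf_le hF.isUpperSet hG.isUpperSet⟩
end

section
/- Let X be a meet-semilattice with greatest element ⊤ and let R be a binary relation on X satisfying the modal L-frame conditions (i)–(v). Then for every filter F of X, the set □_R F = {x ∈ X | ∀ y, R x y → y ∈ F} is a filter of X. -/
/-- The modal L-frame conditions (i)–(v) for a relation on a meet-semilattice with top. -/
def IsModalLFrame {X : Type} [SemilatticeInf X] [OrderTop X] (R : X → X → Prop) : Prop :=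
  (∀ x y z : X, x ≤ y → R y z → ∃ w, R x w ∧ w ≤ z) ∧
  (∀ x y w : X, x ≤ y → R x w → ∃ z, R y z ∧ w ≤ z) ∧
  (∀ x y z : X, R (x ⊓ y) z → ∃ u v, R x u ∧ R y v ∧ u ⊓ v ≤ z) ∧
  (∀ x y u v : X, R x u → R y v → R (x ⊓ y) (u ⊓ v)) ∧
  (∀ x : X, R ⊤ x ↔ x = ⊤)

/-!
Each filter axiom for `□_R F` is inherited from the corresponding axiom for `F` through one
frame condition: `⊤` is related only to `⊤` (v); an `R`-successor of `y ≥ x` is bounded below by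
an `R`-successor of `x` (i); and an `R`-successor of `x ⊓ y` lies above the meet of an
`R`-successor of `x` and one of `y` (iii).
-/

def modalBox {X : Type} (R : X → X → Prop) (F : Set X) : Set X :=
  {x | ∀ y, R x y → y ∈ F}

section ModalBox

variable {X : Type} {R : X → X → Prop} {F : Set X}

theorem top_mem_modalBox [LE X] [OrderTop X] (hR : ∀ y, R ⊤ y → y = ⊤) (hF : ⊤ ∈ F) :
    ⊤ ∈ modalBox R F := by
  intro y hy
  rwa [hR y hy]

theorem isUpperSet_modalBox [Preorder X]
    (hR : ∀ x y z : X, x ≤ y → R y z → ∃ w, R x w ∧ w ≤ z) (hF : IsUpperSet F) :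
    IsUpperSet (modalBox R F) := by
  intro x y hxy hx z hyz
  obtain ⟨w, hxw, hwz⟩ := hR x y z hxy hyz
  exact hF hwz (hx w hxw)

theorem inf_mem_modalBox [SemilatticeInf X]
    (hR : ∀ x y z : X, R (x ⊓ y) z → ∃ u v, R x u ∧ R y v ∧ u ⊓ v ≤ z)
    (hF : IsUpperSet F) (hF_inf : ∀ a ∈ F, ∀ b ∈ F, a ⊓ b ∈ F) {x y : X}
    (hx : x ∈ modalBox R F) (hy : y ∈ modalBox R F) : x ⊓ y ∈ modalBox R F := by
  intro z hz
  obtain ⟨u, v, hxu, hyv, huvz⟩ := hR x y z hz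
  exact hF huvz (hF_inf u (hx u hxu) v (hy v hyv))

end ModalBox

/-- The box of a filter along a modal L-frame relation is a filter. -/
theorem box_preserves_filters (X : Type) [SemilatticeInf X] [OrderTop X]
    (R : X → X → Prop) (hR : IsModalLFrame R)
    (F : Set X) (hF : IsFilterT F) :
    IsFilterT {x : X | ∀ y, R x y → y ∈ F} := by
  obtain ⟨hR_down, -, hR_inf, -, hR_top⟩ := hR
  obtain ⟨hF_top, hF_up, hF_inf⟩ := hF
  have hF_upper : IsUpperSet F := fun a b hab ha => hF_up a ha b hab
  refine ⟨?_, ?_, ?_⟩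
  · exact top_mem_modalBox (fun y => (hR_top y).mp) hF_top
  · exact fun x hx y hxy => isUpperSet_modalBox hR_down hF_upper hxy hx
  · exact fun x hx y hy => inf_mem_modalBox hR_inf hF_upper hF_inf hx hy
end

section
/- Let X be a meet-semilattice with greatest element ⊤ and let R be a binary relation on X satisfying the modal L-frame conditions (i)–(v). Then for every filter F of X, the set ◇_R F = {x ∈ X | ∃ y, R x y ∧ y ∈ F} is a filter of X. -/
theorem isFilterT_iff {X : Type} [SemilatticeInf X] [OrderTop X] (S : Set X) :
    IsFilterT S ↔ ⊤ ∈ S ∧ IsUpperSet S ∧ InfClosed S := by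
  unfold IsFilterT IsUpperSet InfClosed
  grind

section Diamond

variable {X : Type*} {R : X → X → Prop} {F : Set X}

def diamond (R : X → X → Prop) (F : Set X) : Set X := {x | ∃ y, R x y ∧ y ∈ F}

theorem IsUpperSet.diamond [Preorder X]
    (hR : ∀ x y w : X, x ≤ y → R x w → ∃ z, R y z ∧ w ≤ z) (hF : IsUpperSet F) :
    IsUpperSet (diamond R F) := by
  rintro x y hxy ⟨w, hxw, hwF⟩
  obtain ⟨z, hyz, hwz⟩ := hR x y w hxy hxw
  exact ⟨z, hyz, hF hwz hwF⟩

theorem InfClosed.diamond [SemilatticeInf X]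
    (hR : ∀ x y u v : X, R x u → R y v → R (x ⊓ y) (u ⊓ v)) (hF : InfClosed F) :
    InfClosed (diamond R F) := by
  rintro x ⟨u, hxu, huF⟩ y ⟨v, hyv, hvF⟩
  exact ⟨u ⊓ v, hR x y u v hxu hyv, hF huF hvF⟩

end Diamond

/-- The diamond of a filter along a modal L-frame relation is a filter. -/
theorem diamond_preserves_filters (X : Type) [SemilatticeInf X] [OrderTop X]
    (R : X → X → Prop) (hR : IsModalLFrame R)
    (F : Set X) (hF : IsFilterT F) :
    IsFilterT {x : X | ∃ y, R x y ∧ y ∈ F} := by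
  obtain ⟨-, hmono, -, hinf, htop⟩ := hR
  obtain ⟨hFtop, hFup, hFinf⟩ := (isFilterT_iff F).1 hF
  exact (isFilterT_iff (diamond R F)).2
    ⟨⟨⊤, (htop ⊤).2 rfl, hFtop⟩, hFup.diamond hmono, hFinf.diamond hinf⟩
end

section
/- Let X be a meet-semilattice with greatest element ⊤, equipped with a topology, and let R be a binary relation on X satisfying the modal L-space separation condition: for all x, y ∈ X, if for every clopen filter U of X one has (∀ z, R x z → z ∈ U) → y ∈ U and y ∈ U → (∃ w, R x w ∧ w ∈ U), then R x y. Then for every x ∈ X, the set R[x] = {y | R x y} is closed in the topology and order-convex (if y ≤ z ≤ t with y, t ∈ R[x], then z ∈ R[x]). -/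
theorem IsFilterT.isUpperSet_s10 {X : Type} [SemilatticeInf X] [OrderTop X] {U : Set X}
    (hU : IsFilterT U) : IsUpperSet U :=
  fun _ _ hab ha => hU.2.1 _ ha _ hab

/-- With `S = R[x]`, this is the premise of the separation condition for `U`:
`□U` at `x` forces `y ∈ U`, and `y ∈ U` forces `◇U` at `x`. -/
def NotSeparatedBy {X : Type*} (S U : Set X) (y : X) : Prop :=
  (S ⊆ U → y ∈ U) ∧ (y ∈ U → (S ∩ U).Nonempty)

section NotSeparatedBy

variable {X : Type*} {S : Set X} {𝒰 : Set (Set X)}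

theorem exists_isOpen_disjoint_of_not_notSeparatedBy [TopologicalSpace X] {U : Set X} {y : X}
    (hU : IsClopen U) (hy : ¬NotSeparatedBy S U y) : ∃ V, IsOpen V ∧ y ∈ V ∧ Disjoint V S := by
  rw [NotSeparatedBy, not_and_or, Classical.not_imp, Classical.not_imp] at hy
  rcases hy with ⟨hSU, hyU⟩ | ⟨hyU, hSU⟩
  · exact ⟨Uᶜ, hU.isClosed.isOpen_compl, hyU, Set.disjoint_compl_left_iff_subset.mpr hSU⟩
  · exact ⟨U, hU.isOpen, hyU, Set.disjoint_left.mpr fun z hzU hzS => hSU ⟨z, hzS, hzU⟩⟩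

theorem isClosed_of_forall_notSeparatedBy [TopologicalSpace X] (h𝒰 : ∀ U ∈ 𝒰, IsClopen U)
    (hS : ∀ y, (∀ U ∈ 𝒰, NotSeparatedBy S U y) → y ∈ S) : IsClosed S := by
  refine isOpen_compl_iff.mp (isOpen_iff_forall_mem_open.mpr fun y hy => ?_)
  obtain ⟨U, hU𝒰, hyU⟩ : ∃ U ∈ 𝒰, ¬NotSeparatedBy S U y := by
    by_contra! h
    exact hy (hS y h)
  obtain ⟨V, hVopen, hyV, hVS⟩ := exists_isOpen_disjoint_of_not_notSeparatedBy (h𝒰 U hU𝒰) hyU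
  exact ⟨V, Set.subset_compl_iff_disjoint_right.mpr hVS, hVopen, hyV⟩

theorem ordConnected_of_forall_notSeparatedBy [Preorder X] (h𝒰 : ∀ U ∈ 𝒰, IsUpperSet U)
    (hS : ∀ y, (∀ U ∈ 𝒰, NotSeparatedBy S U y) → y ∈ S) : S.OrdConnected := by
  refine ⟨fun y hy t ht z ⟨hyz, hzt⟩ => hS z fun U hU => ⟨fun hSU => ?_, fun hzU => ?_⟩⟩
  · exact h𝒰 U hU hyz (hSU hy)
  · exact ⟨t, ht, h𝒰 U hU hzt hzU⟩

end NotSeparatedBy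

/-- In a modal L-space, every successor set is closed and order-convex. -/
theorem successor_set_closed_convex (X : Type) [SemilatticeInf X] [OrderTop X]
    [TopologicalSpace X] (R : X → X → Prop)
    (hsep : ∀ x y : X,
      (∀ U : Set X, IsClopen U → IsFilterT U →
        ((∀ z, R x z → z ∈ U) → y ∈ U) ∧ (y ∈ U → ∃ w, R x w ∧ w ∈ U)) → R x y) :
    ∀ x : X, IsClosed {y : X | R x y} ∧
      (∀ y z t : X, y ≤ z → z ≤ t → R x y → R x t → R x z) := by
  intro x
  have hsep_x : ∀ y, (∀ U ∈ {U : Set X | IsClopen U ∧ IsFilterT U},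
      NotSeparatedBy {z | R x z} U y) → y ∈ {z | R x z} :=
    fun y h => hsep x y fun U hUc hUf => h U ⟨hUc, hUf⟩
  refine ⟨isClosed_of_forall_notSeparatedBy (fun U hU => hU.1) hsep_x, ?_⟩
  intro y z t hyz hzt hy ht
  exact (ordConnected_of_forall_notSeparatedBy (fun U hU => hU.2.isUpperSet_s10) hsep_x).out hy ht
    ⟨hyz, hzt⟩
end

section
/- Directedness from the Church–Rosser condition: let X be a meet-semilattice and R a binary relation on X such that for every w ∈ X the set R[w] = {y | R w y} is order-convex and closed under binary infima. Assume that for all x, y, z, if R x y and R x z then there exist u, v with R y u, R z v, and u ≤ v. Then R is directed: for all x, y, z, if R x y and R x z then there exists t with R y t and R z t. -/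
theorem Set.OrdConnected.inf_mem_of_le {α : Type*} [SemilatticeInf α] {s : Set α}
    (hs : s.OrdConnected) (hs' : InfClosed s) {a b c : α} (ha : a ∈ s) (hb : b ∈ s)
    (hac : a ≤ c) : c ⊓ b ∈ s :=
  hs.out (hs' ha hb) hb ⟨inf_le_inf_right b hac, inf_le_right⟩

/-- Directedness from the Church–Rosser condition. -/
theorem directed_of_church_rosser (X : Type) [SemilatticeInf X] (R : X → X → Prop)
    (hconv : ∀ w a b c : X, a ≤ b → b ≤ c → R w a → R w c → R w b)
    (hmeet : ∀ w a b : X, R w a → R w b → R w (a ⊓ b))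
    (hCR : ∀ x y z : X, R x y → R x z → ∃ u v : X, R y u ∧ R z v ∧ u ≤ v) :
    ∀ x y z : X, R x y → R x z → ∃ t : X, R y t ∧ R z t := by
  have hord (w : X) : {t | R w t}.OrdConnected :=
    ⟨fun _ ha _ hc _ hb => hconv w _ _ _ hb.1 hb.2 ha hc⟩
  have hinf (w : X) : InfClosed {t | R w t} := fun _ ha _ hb => hmeet w _ _ ha hb
  intro x y z hxy hxz
  obtain ⟨u, v, hyu, hzv, huv⟩ := hCR x y z hxy hxz
  obtain ⟨u', v', hzu', hyv', huv'⟩ := hCR x z y hxz hxy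
  refine ⟨v ⊓ v', (hord y).inf_mem_of_le (hinf y) hyu hyv' huv, ?_⟩
  rw [inf_comm]
  exact (hord z).inf_mem_of_le (hinf z) hzu' hzv huv'
end

section
/- Symmetry from the B-conditions: let X be a partially ordered set and R a binary relation on X such that for every x ∈ X the set R[x] = {y | R x y} is order-convex. Assume that for all x, y with R x y there exists z₁ with R y z₁ and x ≤ z₁, and there exists z₂ with R y z₂ and z₂ ≤ x. Then R is symmetric. -/
/-- Symmetry from the B-conditions. -/
theorem symmetric_of_B_conditions (X : Type) [PartialOrder X] (R : X → X → Prop)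
    (hconv : ∀ x a b c : X, a ≤ b → b ≤ c → R x a → R x c → R x b)
    (hB1 : ∀ x y : X, R x y → ∃ z₁ : X, R y z₁ ∧ x ≤ z₁)
    (hB2 : ∀ x y : X, R x y → ∃ z₂ : X, R y z₂ ∧ z₂ ≤ x) :
    ∀ x y : X, R x y → R y x := by
  intro x y hxy
  obtain ⟨above, hR_above, hx_le⟩ := hB1 x y hxy
  obtain ⟨below, hR_below, hle_x⟩ := hB2 x y hxy
  exact hconv y below x above hle_x hx_le hR_below hR_above
end

section
/- The inclusion of the three-element chain into the four-element Boolean algebra is an epimorphism of bounded distributive lattices: for every distributive bounded lattice M and every pair of bounded lattice homomorphisms f, g : Bool × Bool → M (where Bool × Bool carries the componentwise lattice structure, i.e., it is the four-element Boolean algebra), if f(true, false) = g(true, false) then f = g. -/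
/-! Bounded lattice homomorphisms preserve complements, and complements are unique in a
distributive lattice. Besides `⊥` and `⊤`, the only element of `Bool × Bool` other than
`(true, false)` is its complement `(false, true)`. -/

theorem BoundedLatticeHomClass.map_eq_of_isCompl {F α β : Type*} [Lattice α] [BoundedOrder α]
    [DistribLattice β] [BoundedOrder β] [FunLike F α β] [BoundedLatticeHomClass F α β]
    (f g : F) {a b : α} (hab : IsCompl a b) (h : f a = g a) : f b = g b :=
  (hab.map f).right_unique (h ▸ hab.map g)

/-- The inclusion of the three-element chain into the four-element Boolean algebra
is an epimorphism of bounded distributive lattices: two bounded lattice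
homomorphisms from `Bool × Bool` to a distributive bounded lattice agreeing on
`(true, false)` are equal. -/
theorem three_chain_into_four_boolean_epi (M : Type) [DistribLattice M] [BoundedOrder M]
    (f g : BoundedLatticeHom (Bool × Bool) M)
    (h : f (true, false) = g (true, false)) : f = g := by
  have hcompl : IsCompl ((true, false) : Bool × Bool) (false, true) := by
    rw [Prod.isCompl_iff]
    exact ⟨isCompl_top_bot, isCompl_bot_top⟩
  ext ⟨_ | _, _ | _⟩
  · exact (map_bot f).trans (map_bot g).symm
  · exact BoundedLatticeHomClass.map_eq_of_isCompl f g hcompl h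
  · exact h
  · exact (map_top f).trans (map_top g).symm
end

section
/- Every HMS-space is a complete lattice: let X be a meet-semilattice with greatest element ⊤, equipped with a compact topology such that whenever ¬(x ≤ y) there exists a clopen subset W of X that is upward closed and closed under binary infima, with x ∈ W and y ∉ W. Then every subset of X has a least upper bound and a greatest lower bound in X. -/
/-!
In a Priestley space the intervals `Iic a` and `Ici a` are closed: a clopen upper set separating
two points is an open neighbourhood avoiding the interval, or its complement is. Given `S`, the
closed sets `Iic s` (`s ∈ S`) and the closed set of upper bounds of the lower bounds of `S` have
the finite intersection property, since finitely many of them contain the infimum of the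
corresponding finite subset of `S` (`⊤` for the empty one). By compactness they have a common
point, which is the infimum of `S`. Suprema are the infima of the sets of upper bounds.
-/

open Set

section

variable {X : Type*} [TopologicalSpace X]

section Preorder

variable [Preorder X]

instance (priority := 100) PriestleySpace.toClosedIicTopology [PriestleySpace X] :
    ClosedIicTopology X where
  isClosed_Iic a := by
    refine isOpen_compl_iff.mp <| isOpen_iff_forall_mem_open.mpr fun x hx => ?_
    obtain ⟨U, hU, hUup, hxU, haU⟩ := exists_isClopen_upper_of_not_le hx
    exact ⟨U, fun y hyU hya => haU (hUup hya hyU), hU.isOpen, hxU⟩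

instance (priority := 100) PriestleySpace.toClosedIciTopology [PriestleySpace X] :
    ClosedIciTopology X where
  isClosed_Ici a := by
    refine isOpen_compl_iff.mp <| isOpen_iff_forall_mem_open.mpr fun x hx => ?_
    obtain ⟨U, hU, hUup, haU, hxU⟩ := exists_isClopen_upper_of_not_le hx
    exact ⟨Uᶜ, fun y hyU hay => hyU (hUup hay haU), hU.compl.isOpen, hxU⟩

theorem isClosed_upperBounds [ClosedIciTopology X] (T : Set X) : IsClosed (upperBounds T) := by
  rw [show upperBounds T = ⋂ a ∈ T, Ici a by ext; simp [upperBounds]]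
  exact isClosed_biInter fun a _ => isClosed_Ici

end Preorder

theorem CompactSpace.exists_isGLB [SemilatticeInf X] [OrderTop X] [CompactSpace X]
    [ClosedIicTopology X] [ClosedIciTopology X] (S : Set X) : ∃ p, IsGLB S p := by
  obtain ⟨p, hpU, hpS⟩ := (isClosed_upperBounds (lowerBounds S)).isCompact.inter_iInter_nonempty
    (fun s : S => Iic (s : X)) (fun _ => isClosed_Iic) fun F =>
      ⟨F.inf (↑), fun b hb => Finset.le_inf fun s _ => hb s.2,
        mem_iInter₂.mpr fun _ hs => Finset.inf_le hs⟩
  exact ⟨p, fun s hs => mem_iInter.mp hpS ⟨s, hs⟩, hpU⟩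

end

/-- Every HMS-space is a complete lattice: every subset has a least upper bound
and a greatest lower bound. -/
theorem hms_space_complete_lattice (X : Type) [SemilatticeInf X] [OrderTop X]
    [TopologicalSpace X] [CompactSpace X]
    (hsep : ∀ x y : X, ¬ x ≤ y → ∃ W : Set X, IsClopen W ∧
      (∀ a ∈ W, ∀ b, a ≤ b → b ∈ W) ∧ (∀ a ∈ W, ∀ b ∈ W, a ⊓ b ∈ W) ∧
      x ∈ W ∧ y ∉ W) :
    ∀ S : Set X, (∃ a : X, IsLUB S a) ∧ (∃ b : X, IsGLB S b) := by
  have : PriestleySpace X := ⟨fun {x y} hxy =>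
    let ⟨W, hW, hWup, _, hxW, hyW⟩ := hsep x y hxy
    ⟨W, hW, fun a b hab haW => hWup a haW b hab, hxW, hyW⟩⟩
  intro S
  exact ⟨(CompactSpace.exists_isGLB (upperBounds S)).imp fun _ => isGLB_upperBounds.mp,
    CompactSpace.exists_isGLB S⟩
end
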